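/- arXiv:1103.6077 — 2 statements merged into one kernel-verified Lean document; each statement's English description precedes it below -/
import Mathlib

section
/- Let n ≥ 1 and j ≥ 0 be integers, let w̃₁, …, w̃_n be real numbers, D̃ = diag(w̃₁, …, w̃_n), ã = [[0,D̃],[D̃,0]] ∈ M(2n,ℝ) (in n×n block notation), and σ₁(ã) = S ã S where S = diag(−1,…,−1,1,…,1) with n+1 entries −1 followed by n−1 entries 1. Then for every real λ ≠ 0 and every invertible T ∈ GL(2n,ℝ), the matrix f = T(ã λ^{2j+1} + σ₁(ã) λ^{−(2j+1)})T⁻¹ satisfies the polynomial identity (f − w̃₁(λ^{2j+1} + λ^{−(2j+1)})I)(f + w̃₁(λ^{2j+1} + λ^{−(2j+1)})I) · Π_{s=2}^{n} (f − w̃_s(λ^{2j+1} − λ^{−(2j+1)})I)(f + w̃_s(λ^{2j+1} − λ^{−(2j+1)})I) = 0. -/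
/-! With `μ = λ^(2j+1)` and `ν = λ^(-(2j+1))`, the pencil `μ ã + ν σ₁(ã)` is again of the form
`[[0, D], [D, 0]]` with `D = diag(u)`, `u₁ = w₁(μ + ν)` and `u_s = w_s(μ - ν)` for `s ≥ 2`, since
conjugation by `S` flips the sign of every entry of `D̃` except `w₁`. Its square is `diag(D², D²)`,
so it is annihilated by `∏ (X² - u_s²)`, and conjugating by `T` commutes with evaluating
polynomials. -/

noncomputable section

open Matrix Polynomial

/-- S = diag(−1,…,−1,1,…,1), n+1 entries −1 followed by n−1 entries 1, on Fin n ⊕ Fin n -/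
def Smat (n : ℕ) : Matrix (Fin n ⊕ Fin n) (Fin n ⊕ Fin n) ℝ :=
  Matrix.diagonal (Sum.elim (fun _ => (-1 : ℝ)) (fun k => if (k : ℕ) = 0 then -1 else 1))

/-- σ₁(X) = S X S -/
def sigma1 {n : ℕ} (X : Matrix (Fin n ⊕ Fin n) (Fin n ⊕ Fin n) ℝ) :
    Matrix (Fin n ⊕ Fin n) (Fin n ⊕ Fin n) ℝ :=
  Smat n * X * Smat n

theorem Polynomial.aeval_units_conj {R A : Type*} [CommSemiring R] [Semiring A] [Algebra R A]
    (p : R[X]) (u : Aˣ) (x : A) : aeval (↑u * x * ↑u⁻¹ : A) p = ↑u * aeval x p * ↑u⁻¹ :=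
  aeval_smul p (ConjAct.toConjAct u) x

theorem Matrix.aeval_conj_of_isUnit {m R : Type*} [Fintype m] [DecidableEq m] [CommRing R]
    (p : R[X]) {T : Matrix m m R} (hT : IsUnit T) (M : Matrix m m R) :
    aeval (T * M * T⁻¹) p = T * aeval M p * T⁻¹ := by
  obtain ⟨U, rfl⟩ := hT
  rw [← coe_units_inv]
  exact aeval_units_conj p U M

theorem Matrix.aeval_diagonal {m R : Type*} [Fintype m] [DecidableEq m] [CommSemiring R]
    (p : R[X]) (v : m → R) : aeval (diagonal v) p = diagonal fun i => p.eval (v i) := by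
  rw [← diagonalAlgHom_apply R, aeval_algHom_apply, diagonalAlgHom_apply]
  congr 1
  funext i
  rw [aeval_fn_apply, coe_aeval_eq_eval]

theorem Matrix.fromBlocks_zero_diagonal_sq {m R : Type*} [Fintype m] [DecidableEq m]
    [CommSemiring R] (d : m → R) :
    fromBlocks 0 (diagonal d) (diagonal d) 0 ^ 2 =
      diagonal (Sum.elim (fun i => d i ^ 2) (fun i => d i ^ 2)) := by
  rw [sq, fromBlocks_multiply, ← fromBlocks_diagonal]
  simp [diagonal_mul_diagonal, sq]

theorem Matrix.aeval_fromBlocks_zero_diagonal_prod_eq_zero {m R : Type*} [Fintype m]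
    [DecidableEq m] [CommRing R] (d : m → R) :
    aeval (fromBlocks 0 (diagonal d) (diagonal d) 0) (∏ i, (X - C (d i)) * (X + C (d i))) = 0 := by
  have hcomp : ∏ i, (X - C (d i)) * (X + C (d i)) = (∏ i, (X - C (d i ^ 2))).comp (X ^ 2) := by
    rw [prod_comp]
    refine Finset.prod_congr rfl fun i _ => ?_
    rw [sub_comp, X_comp, C_comp, C_pow]
    ring
  rw [hcomp, aeval_comp, map_pow, aeval_X, fromBlocks_zero_diagonal_sq, aeval_diagonal,
    diagonal_eq_zero]
  funext k
  rcases k with i | i <;>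
    simp only [eval_prod, eval_sub, eval_X, eval_C, Sum.elim_inl, Sum.elim_inr] <;>
    exact Finset.prod_eq_zero (Finset.mem_univ i) (sub_self _)

theorem sigma1_fromBlocks_zero_diagonal {n : ℕ} (d : Fin n → ℝ) :
    sigma1 (fromBlocks 0 (diagonal d) (diagonal d) 0) =
      fromBlocks 0 (diagonal fun i : Fin n => if (i : ℕ) = 0 then d i else -d i)
        (diagonal fun i : Fin n => if (i : ℕ) = 0 then d i else -d i) 0 := by
  rw [sigma1, Smat, ← fromBlocks_diagonal, fromBlocks_multiply, fromBlocks_multiply]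
  simp only [mul_zero, zero_mul, add_zero, zero_add, diagonal_mul_diagonal]
  congr 2 <;> funext i <;> split_ifs <;> ring

theorem characteristic_identity_general (n j : ℕ) (hn : 0 < n) (w : Fin n → ℝ)
    (lam : ℝ)
    (T : Matrix (Fin n ⊕ Fin n) (Fin n ⊕ Fin n) ℝ) (hT : IsUnit T) :
    -- ã = [[0,D̃],[D̃,0]] with D̃ = diag(w̃₁,…,w̃_n)
    ∀ atil : Matrix (Fin n ⊕ Fin n) (Fin n ⊕ Fin n) ℝ,
      atil = Matrix.fromBlocks 0 (Matrix.diagonal w) (Matrix.diagonal w) 0 →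
    ∀ f : Matrix (Fin n ⊕ Fin n) (Fin n ⊕ Fin n) ℝ,
      f = T * (lam ^ (2*(j : ℤ)+1) • atil + lam ^ (-(2*(j : ℤ)+1)) • sigma1 atil) * T⁻¹ →
      (Polynomial.aeval f)
        ((X - C (w ⟨0, hn⟩ * (lam ^ (2*(j : ℤ)+1) + lam ^ (-(2*(j : ℤ)+1)))))
          * (X + C (w ⟨0, hn⟩ * (lam ^ (2*(j : ℤ)+1) + lam ^ (-(2*(j : ℤ)+1)))))
          * ∏ s ∈ Finset.univ.erase (⟨0, hn⟩ : Fin n),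
              ((X - C (w s * (lam ^ (2*(j : ℤ)+1) - lam ^ (-(2*(j : ℤ)+1)))))
                * (X + C (w s * (lam ^ (2*(j : ℤ)+1) - lam ^ (-(2*(j : ℤ)+1))))))) = 0 := by
  rintro atil rfl f rfl
  set μ := lam ^ (2 * (j : ℤ) + 1)
  set ν := lam ^ (-(2 * (j : ℤ) + 1))
  set u : Fin n → ℝ := fun s => if (s : ℕ) = 0 then w s * (μ + ν) else w s * (μ - ν) with hu
  have hpencil : μ • fromBlocks 0 (diagonal w) (diagonal w) 0 +
      ν • sigma1 (fromBlocks 0 (diagonal w) (diagonal w) 0) =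
        fromBlocks 0 (diagonal u) (diagonal u) 0 := by
    rw [sigma1_fromBlocks_zero_diagonal, fromBlocks_smul, fromBlocks_smul, fromBlocks_add]
    simp only [smul_zero, add_zero, ← diagonal_smul, diagonal_add, hu]
    congr 2 <;> funext s <;> simp only [Pi.smul_apply, smul_eq_mul] <;>
      split_ifs <;> ring
  have hpoly : (X - C (w ⟨0, hn⟩ * (μ + ν))) * (X + C (w ⟨0, hn⟩ * (μ + ν))) *
      ∏ s ∈ Finset.univ.erase ⟨0, hn⟩, (X - C (w s * (μ - ν))) * (X + C (w s * (μ - ν))) =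
        ∏ s, (X - C (u s)) * (X + C (u s)) := by
    rw [← Finset.mul_prod_erase _ _ (Finset.mem_univ ⟨0, hn⟩)]
    congr 1
    refine Finset.prod_congr rfl fun s hs => ?_
    have hs0 : (s : ℕ) ≠ 0 := fun h => Finset.ne_of_mem_erase hs (Fin.ext h)
    simp only [hu, if_neg hs0]
  rw [hpencil, hpoly, aeval_conj_of_isUnit _ hT, aeval_fromBlocks_zero_diagonal_prod_eq_zero,
    mul_zero, zero_mul]

theorem characteristic_identity (n j : ℕ) (hn : 0 < n) (w : Fin n → ℝ)
    (lam : ℝ) (hlam : lam ≠ 0)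
    (T : Matrix (Fin n ⊕ Fin n) (Fin n ⊕ Fin n) ℝ) (hT : IsUnit T) :
    -- ã = [[0,D̃],[D̃,0]] with D̃ = diag(w̃₁,…,w̃_n)
    ∀ atil : Matrix (Fin n ⊕ Fin n) (Fin n ⊕ Fin n) ℝ,
      atil = Matrix.fromBlocks 0 (Matrix.diagonal w) (Matrix.diagonal w) 0 →
    ∀ f : Matrix (Fin n ⊕ Fin n) (Fin n ⊕ Fin n) ℝ,
      f = T * (lam ^ (2*(j : ℤ)+1) • atil + lam ^ (-(2*(j : ℤ)+1)) • sigma1 atil) * T⁻¹ →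
      (Polynomial.aeval f)
        ((X - C (w ⟨0, hn⟩ * (lam ^ (2*(j : ℤ)+1) + lam ^ (-(2*(j : ℤ)+1)))))
          * (X + C (w ⟨0, hn⟩ * (lam ^ (2*(j : ℤ)+1) + lam ^ (-(2*(j : ℤ)+1)))))
          * ∏ s ∈ Finset.univ.erase (⟨0, hn⟩ : Fin n),
              ((X - C (w s * (lam ^ (2*(j : ℤ)+1) - lam ^ (-(2*(j : ℤ)+1)))))
                * (X + C (w s * (lam ^ (2*(j : ℤ)+1) - lam ^ (-(2*(j : ℤ)+1))))))) = 0 :=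
  characteristic_identity_general n j hn w lam T hT

end
end

section
/- Let u, α, β : ℝ² → ℝ be smooth functions of (x₁,x₂). Define the 4×4 complex matrix-valued functions (in 2×2 block notation): A_j = [[0, G Ĵ^{1/2} e_j],[e_j Ĵ^{−1/2} Gᵗ Ĵ, 0]], B_j = [[0, −I_{1,1} G Ĵ^{1/2} e_j],[−e_j Ĵ^{−1/2} Gᵗ I_{1,1} Ĵ, 0]], C_j = [[0,0],[0, Ĵ^{−1/2} γ_j Ĵ^{1/2}]] for j = 1, 2, where G = [[cosh(u/2), sinh(u/2)],[sinh(u/2), cosh(u/2)]], γ₁ = [[0,α],[−α,0]], γ₂ = [[0,β],[−β,0]], Ĵ = diag(1,−1), Ĵ^{1/2} = diag(1,i), Ĵ^{−1/2} = diag(1,−i), I_{1,1} = diag(−1,1). Set P_j(λ) = (1/2)λ A_j − (1/(2λ)) B_j + C_j. Then the compatibility condition ∂_{x₁} P₂(λ) − ∂_{x₂} P₁(λ) = [P₁(λ), P₂(λ)] holds for all complex λ ≠ 0 if and only if α = −(1/2)∂_{x₂} u, β = (1/2)∂_{x₁} u, and ∂_{x₁} β − ∂_{x₂} α = −(1/2)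 sinh u; consequently, in that case u satisfies the sinh-Laplace equation ∂_{x₁}² u + ∂_{x₂}² u = −sinh u. -/
/- STATEMENT 11: the n = 2, K = +1 computation in Remark 3.7 (Ex:twisteduk2):
   the compatibility conditions of the Lax pair for the generating equation yield
   the sinh-Laplace equation u_{x₁x₁} + u_{x₂x₂} = −sinh u. -/

noncomputable section

open Matrix

/-- partial derivative in the first variable x₁ -/
def p1 (f : ℝ → ℝ → ℝ) (x1 x2 : ℝ) : ℝ := deriv (fun s => f s x2) x1

/-- partial derivative in the second variable x₂ -/
def p2 (f : ℝ → ℝ → ℝ) (x1 x2 : ℝ) : ℝ := deriv (fun s => f x1 s) x2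

/-- entrywise ∂_{x₁} of a complex-matrix-valued function -/
def p1M (f : ℝ → ℝ → Matrix (Fin 2 ⊕ Fin 2) (Fin 2 ⊕ Fin 2) ℂ) (x1 x2 : ℝ) :
    Matrix (Fin 2 ⊕ Fin 2) (Fin 2 ⊕ Fin 2) ℂ :=
  Matrix.of fun a b => deriv (fun s => f s x2 a b) x1

/-- entrywise ∂_{x₂} of a complex-matrix-valued function -/
def p2M (f : ℝ → ℝ → Matrix (Fin 2 ⊕ Fin 2) (Fin 2 ⊕ Fin 2) ℂ) (x1 x2 : ℝ) :
    Matrix (Fin 2 ⊕ Fin 2) (Fin 2 ⊕ Fin 2) ℂ :=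
  Matrix.of fun a b => deriv (fun s => f x1 s a b) x2

/-- e_j : 2×2 diagonal matrix with 1 in the j-th diagonal entry -/
def eMat (j : Fin 2) : Matrix (Fin 2) (Fin 2) ℂ := Matrix.diagonal (Pi.single j 1)

/-- Ĵ = diag(1,−1) -/
def Jhat : Matrix (Fin 2) (Fin 2) ℂ := !![1, 0; 0, -1]

/-- Ĵ^{1/2} = diag(1,i) -/
def Jh : Matrix (Fin 2) (Fin 2) ℂ := !![1, 0; 0, Complex.I]

/-- Ĵ^{−1/2} = diag(1,−i) -/
def Jnh : Matrix (Fin 2) (Fin 2) ℂ := !![1, 0; 0, -Complex.I]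

/-- I_{1,1} = diag(−1,1) -/
def I11 : Matrix (Fin 2) (Fin 2) ℂ := !![-1, 0; 0, 1]

/-- G = [[cosh(u/2), sinh(u/2)],[sinh(u/2), cosh(u/2)]] -/
def Gmat (u : ℝ → ℝ → ℝ) (x1 x2 : ℝ) : Matrix (Fin 2) (Fin 2) ℂ :=
  !![(Real.cosh (u x1 x2 / 2) : ℂ), (Real.sinh (u x1 x2 / 2) : ℂ);
     (Real.sinh (u x1 x2 / 2) : ℂ), (Real.cosh (u x1 x2 / 2) : ℂ)]

/-- γ₁ = [[0,α],[−α,0]], γ₂ = [[0,β],[−β,0]] -/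
def gam (s : ℝ → ℝ → ℝ) (x1 x2 : ℝ) : Matrix (Fin 2) (Fin 2) ℂ :=
  !![0, (s x1 x2 : ℂ); (-(s x1 x2) : ℂ), 0]

/-- A_j = [[0, G Ĵ^{1/2} e_j],[e_j Ĵ^{−1/2} Gᵗ Ĵ, 0]] -/
def Amat (u : ℝ → ℝ → ℝ) (j : Fin 2) (x1 x2 : ℝ) :
    Matrix (Fin 2 ⊕ Fin 2) (Fin 2 ⊕ Fin 2) ℂ :=
  Matrix.fromBlocks 0 (Gmat u x1 x2 * Jh * eMat j)
    (eMat j * Jnh * (Gmat u x1 x2)ᵀ * Jhat) 0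

/-- B_j = [[0, −I_{1,1} G Ĵ^{1/2} e_j],[−e_j Ĵ^{−1/2} Gᵗ I_{1,1} Ĵ, 0]] -/
def Bmat (u : ℝ → ℝ → ℝ) (j : Fin 2) (x1 x2 : ℝ) :
    Matrix (Fin 2 ⊕ Fin 2) (Fin 2 ⊕ Fin 2) ℂ :=
  Matrix.fromBlocks 0 (-(I11 * Gmat u x1 x2 * Jh * eMat j))
    (-(eMat j * Jnh * (Gmat u x1 x2)ᵀ * I11 * Jhat)) 0

/-- C_j = [[0,0],[0, Ĵ^{−1/2} γ_j Ĵ^{1/2}]] -/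
def Cmat (g : ℝ → ℝ → ℝ) (x1 x2 : ℝ) : Matrix (Fin 2 ⊕ Fin 2) (Fin 2 ⊕ Fin 2) ℂ :=
  Matrix.fromBlocks 0 0 0 (Jnh * gam g x1 x2 * Jh)

/-- P_j(λ) = (1/2)λ A_j − (1/(2λ)) B_j + C_j -/
def Pmat (u g : ℝ → ℝ → ℝ) (j : Fin 2) (lam : ℂ) (x1 x2 : ℝ) :
    Matrix (Fin 2 ⊕ Fin 2) (Fin 2 ⊕ Fin 2) ℂ :=
  ((1/2 : ℂ) * lam) • Amat u j x1 x2 - (1/(2*lam)) • Bmat u j x1 x2 + Cmat g x1 x2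


lemma cosh_ne (x : ℝ) : ((Real.cosh x : ℝ) : ℂ) ≠ 0 := by
  exact_mod_cast (Real.cosh_pos x).ne'

lemma deriv_zmul {z : ℂ} {f : ℝ → ℝ} {f' x : ℝ} (hf : HasDerivAt f f' x) :
    deriv (fun t => z * ((f t : ℝ) : ℂ)) x = z * ((f' : ℝ) : ℂ) :=
  (hf.ofReal_comp.const_mul z).deriv

lemma hderiv1 {u : ℝ → ℝ → ℝ} (hu : ContDiff ℝ (⊤ : ℕ∞) (Function.uncurry u)) (x1 x2 : ℝ) :
    HasDerivAt (fun s => u s x2) (p1 u x1 x2) x1 := by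
  have h : DifferentiableAt ℝ (fun s => u s x2) x1 :=
    ((hu.differentiable (by simp)) (x1, x2)).comp (f := fun s => (s, x2)) x1
      (differentiableAt_id.prodMk (differentiableAt_const x2))
  exact h.hasDerivAt

lemma hderiv2 {u : ℝ → ℝ → ℝ} (hu : ContDiff ℝ (⊤ : ℕ∞) (Function.uncurry u)) (x1 x2 : ℝ) :
    HasDerivAt (fun s => u x1 s) (p2 u x1 x2) x2 := by
  have h : DifferentiableAt ℝ (fun s => u x1 s) x2 :=
    ((hu.differentiable (by simp)) (x1, x2)).comp x2
      ((differentiableAt_const x1).prodMk differentiableAt_id)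
  exact h.hasDerivAt

lemma fromBlocks_sub {n m o p : Type*} {R : Type*} [Sub R]
    (A : Matrix n m R) (B : Matrix n o R) (C : Matrix p m R) (D : Matrix p o R)
    (A' : Matrix n m R) (B' : Matrix n o R) (C' : Matrix p m R) (D' : Matrix p o R) :
    Matrix.fromBlocks A B C D - Matrix.fromBlocks A' B' C' D'
      = Matrix.fromBlocks (A - A') (B - B') (C - C') (D - D') := by
  ext a b
  rcases a with a | a <;> rcases b with b | b <;>
    simp [Matrix.sub_apply, Matrix.fromBlocks_apply₁₁, Matrix.fromBlocks_apply₁₂,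
      Matrix.fromBlocks_apply₂₁, Matrix.fromBlocks_apply₂₂]

lemma P0_eq (u g : ℝ → ℝ → ℝ) (lam : ℂ) (x1 x2 : ℝ) :
    Pmat u g 0 lam x1 x2 =
      Matrix.fromBlocks 0
        !![(1/2*lam - 1/(2*lam)) * (Real.cosh (u x1 x2 / 2) : ℂ), 0;
           (1/2*lam + 1/(2*lam)) * (Real.sinh (u x1 x2 / 2) : ℂ), 0]
        !![(1/2*lam - 1/(2*lam)) * (Real.cosh (u x1 x2 / 2) : ℂ),
           (-(1/2*lam + 1/(2*lam))) * (Real.sinh (u x1 x2 / 2) : ℂ); 0, 0]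
        !![0, Complex.I * (g x1 x2 : ℂ); Complex.I * (g x1 x2 : ℂ), 0] := by
  have hTA : Gmat u x1 x2 * Jh * eMat 0 =
      !![(Real.cosh (u x1 x2 / 2) : ℂ), 0; (Real.sinh (u x1 x2 / 2) : ℂ), 0] := by
    ext i j; fin_cases i <;> fin_cases j <;> simp [Gmat, Jh, eMat, Matrix.mul_apply, Fin.sum_univ_two, Pi.single_apply, Matrix.transpose_apply, Matrix.vecMul, Matrix.vecHead, Matrix.vecTail, dotProduct, Matrix.diagonal_apply]
  have hBA : eMat 0 * Jnh * (Gmat u x1 x2)ᵀ * Jhat =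
      !![(Real.cosh (u x1 x2 / 2) : ℂ), -(Real.sinh (u x1 x2 / 2) : ℂ); 0, 0] := by
    ext i j; fin_cases i <;> fin_cases j <;> simp [Gmat, Jnh, Jhat, eMat, Matrix.mul_apply, Fin.sum_univ_two, Pi.single_apply, Matrix.transpose_apply, Matrix.vecMul, Matrix.vecHead, Matrix.vecTail, dotProduct, Matrix.diagonal_apply]
  have hTB : -(I11 * Gmat u x1 x2 * Jh * eMat 0) =
      !![(Real.cosh (u x1 x2 / 2) : ℂ), 0; -(Real.sinh (u x1 x2 / 2) : ℂ), 0] := by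
    ext i j; fin_cases i <;> fin_cases j <;> simp [Gmat, Jh, I11, eMat, Matrix.mul_apply, Fin.sum_univ_two, Pi.single_apply, Matrix.transpose_apply, Matrix.vecMul, Matrix.vecHead, Matrix.vecTail, dotProduct, Matrix.diagonal_apply]
  have hBB : -(eMat 0 * Jnh * (Gmat u x1 x2)ᵀ * I11 * Jhat) =
      !![(Real.cosh (u x1 x2 / 2) : ℂ), (Real.sinh (u x1 x2 / 2) : ℂ); 0, 0] := by
    ext i j; fin_cases i <;> fin_cases j <;> simp [Gmat, Jnh, Jhat, I11, eMat, Matrix.mul_apply, Fin.sum_univ_two, Pi.single_apply, Matrix.transpose_apply, Matrix.vecMul, Matrix.vecHead, Matrix.vecTail, dotProduct, Matrix.diagonal_apply]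
  have hCC : Jnh * gam g x1 x2 * Jh =
      !![0, Complex.I * (g x1 x2 : ℂ); Complex.I * (g x1 x2 : ℂ), 0] := by
    ext i j; fin_cases i <;> fin_cases j <;> simp [gam, Jnh, Jh, Matrix.mul_apply, Fin.sum_univ_two, Pi.single_apply, Matrix.transpose_apply, Matrix.vecMul, Matrix.vecHead, Matrix.vecTail, dotProduct, Matrix.diagonal_apply] <;> ring
  rw [Pmat, Amat, Bmat, Cmat, hTA, hBA, hTB, hBB, hCC]
  ext a b
  rcases a with a | a <;> rcases b with b | b <;>
    simp only [Matrix.add_apply, Matrix.sub_apply, Matrix.smul_apply,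
      Matrix.fromBlocks_apply₁₁, Matrix.fromBlocks_apply₁₂,
      Matrix.fromBlocks_apply₂₁, Matrix.fromBlocks_apply₂₂] <;>
    fin_cases a <;> fin_cases b <;>
    simp [smul_eq_mul] <;> ring

lemma P1_eq (u g : ℝ → ℝ → ℝ) (lam : ℂ) (x1 x2 : ℝ) :
    Pmat u g 1 lam x1 x2 =
      Matrix.fromBlocks 0
        !![0, (Complex.I * (1/2*lam - 1/(2*lam))) * (Real.sinh (u x1 x2 / 2) : ℂ);
           0, (Complex.I * (1/2*lam + 1/(2*lam))) * (Real.cosh (u x1 x2 / 2) : ℂ)]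
        !![0, 0;
           (-(Complex.I * (1/2*lam - 1/(2*lam)))) * (Real.sinh (u x1 x2 / 2) : ℂ),
           (Complex.I * (1/2*lam + 1/(2*lam))) * (Real.cosh (u x1 x2 / 2) : ℂ)]
        !![0, Complex.I * (g x1 x2 : ℂ); Complex.I * (g x1 x2 : ℂ), 0] := by
  have hTA : Gmat u x1 x2 * Jh * eMat 1 =
      !![0, (Real.sinh (u x1 x2 / 2) : ℂ) * Complex.I;
         0, (Real.cosh (u x1 x2 / 2) : ℂ) * Complex.I] := by
    ext i j; fin_cases i <;> fin_cases j <;> simp [Gmat, Jh, eMat, Matrix.mul_apply, Fin.sum_univ_two, Pi.single_apply, Matrix.transpose_apply, Matrix.vecMul, Matrix.vecHead, Matrix.vecTail, dotProduct, Matrix.diagonal_apply]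
  have hBA : eMat 1 * Jnh * (Gmat u x1 x2)ᵀ * Jhat =
      !![0, 0; -((Real.sinh (u x1 x2 / 2) : ℂ) * Complex.I),
         (Real.cosh (u x1 x2 / 2) : ℂ) * Complex.I] := by
    ext i j; fin_cases i <;> fin_cases j <;> simp [Gmat, Jnh, Jhat, eMat, Matrix.mul_apply, Fin.sum_univ_two, Pi.single_apply, Matrix.transpose_apply, Matrix.vecMul, Matrix.vecHead, Matrix.vecTail, dotProduct, Matrix.diagonal_apply] <;> ring
  have hTB : -(I11 * Gmat u x1 x2 * Jh * eMat 1) =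
      !![0, (Real.sinh (u x1 x2 / 2) : ℂ) * Complex.I;
         0, -((Real.cosh (u x1 x2 / 2) : ℂ) * Complex.I)] := by
    ext i j; fin_cases i <;> fin_cases j <;> simp [Gmat, Jh, I11, eMat, Matrix.mul_apply, Fin.sum_univ_two, Pi.single_apply, Matrix.transpose_apply, Matrix.vecMul, Matrix.vecHead, Matrix.vecTail, dotProduct, Matrix.diagonal_apply] <;> ring
  have hBB : -(eMat 1 * Jnh * (Gmat u x1 x2)ᵀ * I11 * Jhat) =
      !![0, 0; -((Real.sinh (u x1 x2 / 2) : ℂ) * Complex.I),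
         -((Real.cosh (u x1 x2 / 2) : ℂ) * Complex.I)] := by
    ext i j; fin_cases i <;> fin_cases j <;> simp [Gmat, Jnh, Jhat, I11, eMat, Matrix.mul_apply, Fin.sum_univ_two, Pi.single_apply, Matrix.transpose_apply, Matrix.vecMul, Matrix.vecHead, Matrix.vecTail, dotProduct, Matrix.diagonal_apply] <;> ring
  have hCC : Jnh * gam g x1 x2 * Jh =
      !![0, Complex.I * (g x1 x2 : ℂ); Complex.I * (g x1 x2 : ℂ), 0] := by
    ext i j; fin_cases i <;> fin_cases j <;> simp [gam, Jnh, Jh, Matrix.mul_apply, Fin.sum_univ_two, Pi.single_apply, Matrix.transpose_apply, Matrix.vecMul, Matrix.vecHead, Matrix.vecTail, dotProduct, Matrix.diagonal_apply] <;> ring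
  rw [Pmat, Amat, Bmat, Cmat, hTA, hBA, hTB, hBB, hCC]
  ext a b
  rcases a with a | a <;> rcases b with b | b <;>
    simp only [Matrix.add_apply, Matrix.sub_apply, Matrix.smul_apply,
      Matrix.fromBlocks_apply₁₁, Matrix.fromBlocks_apply₁₂,
      Matrix.fromBlocks_apply₂₁, Matrix.fromBlocks_apply₂₂] <;>
    fin_cases a <;> fin_cases b <;>
    simp [smul_eq_mul] <;> ring

lemma p1M_P1_eq {u β : ℝ → ℝ → ℝ} (hu : ContDiff ℝ (⊤ : ℕ∞) (Function.uncurry u))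
    (hβ : ContDiff ℝ (⊤ : ℕ∞) (Function.uncurry β)) (lam : ℂ) (x1 x2 : ℝ) :
    p1M (fun y1 y2 => Pmat u β 1 lam y1 y2) x1 x2 =
      Matrix.fromBlocks 0
        !![0, (Complex.I * (1/2*lam - 1/(2*lam))) *
              ((Real.cosh (u x1 x2 / 2) * (p1 u x1 x2 / 2) : ℝ) : ℂ);
           0, (Complex.I * (1/2*lam + 1/(2*lam))) *
              ((Real.sinh (u x1 x2 / 2) * (p1 u x1 x2 / 2) : ℝ) : ℂ)]
        !![0, 0;
           (-(Complex.I * (1/2*lam - 1/(2*lam)))) *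
              ((Real.cosh (u x1 x2 / 2) * (p1 u x1 x2 / 2) : ℝ) : ℂ),
           (Complex.I * (1/2*lam + 1/(2*lam))) *
              ((Real.sinh (u x1 x2 / 2) * (p1 u x1 x2 / 2) : ℝ) : ℂ)]
        !![0, Complex.I * ((p1 β x1 x2 : ℝ) : ℂ);
           Complex.I * ((p1 β x1 x2 : ℝ) : ℂ), 0] := by
  have hsh : HasDerivAt (fun s => Real.sinh (u s x2 / 2))
      (Real.cosh (u x1 x2 / 2) * (p1 u x1 x2 / 2)) x1 :=
    ((hderiv1 hu x1 x2).div_const 2).sinh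
  have hch : HasDerivAt (fun s => Real.cosh (u s x2 / 2))
      (Real.sinh (u x1 x2 / 2) * (p1 u x1 x2 / 2)) x1 :=
    ((hderiv1 hu x1 x2).div_const 2).cosh
  have hb : HasDerivAt (fun s => β s x2) (p1 β x1 x2) x1 := hderiv1 hβ x1 x2
  have hrw : ∀ s : ℝ, Pmat u β 1 lam s x2 =
      Matrix.fromBlocks 0
        !![0, (Complex.I * (1/2*lam - 1/(2*lam))) * (Real.sinh (u s x2 / 2) : ℂ);
           0, (Complex.I * (1/2*lam + 1/(2*lam))) * (Real.cosh (u s x2 / 2) : ℂ)]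
        !![0, 0;
           (-(Complex.I * (1/2*lam - 1/(2*lam)))) * (Real.sinh (u s x2 / 2) : ℂ),
           (Complex.I * (1/2*lam + 1/(2*lam))) * (Real.cosh (u s x2 / 2) : ℂ)]
        !![0, Complex.I * (β s x2 : ℂ); Complex.I * (β s x2 : ℂ), 0] :=
    fun s => P1_eq u β lam s x2
  ext a b
  simp only [p1M, Matrix.of_apply, hrw]
  rcases a with a | a <;> rcases b with b | b <;>
    simp only [Matrix.fromBlocks_apply₁₁, Matrix.fromBlocks_apply₁₂,
      Matrix.fromBlocks_apply₂₁, Matrix.fromBlocks_apply₂₂] <;>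
    fin_cases a <;> fin_cases b <;>
    simp only [Matrix.cons_val', Matrix.cons_val_zero, Matrix.cons_val_one,
      Matrix.head_cons, Matrix.empty_val', Matrix.cons_val_fin_one, Matrix.head_fin_const,
      Matrix.zero_apply, Fin.isValue] <;>
    first
      | exact deriv_const _ _
      | exact deriv_zmul hsh
      | exact deriv_zmul hch
      | exact deriv_zmul hb

lemma p2M_P0_eq {u α : ℝ → ℝ → ℝ} (hu : ContDiff ℝ (⊤ : ℕ∞) (Function.uncurry u))
    (hα : ContDiff ℝ (⊤ : ℕ∞) (Function.uncurry α)) (lam : ℂ) (x1 x2 : ℝ) :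
    p2M (fun y1 y2 => Pmat u α 0 lam y1 y2) x1 x2 =
      Matrix.fromBlocks 0
        !![(1/2*lam - 1/(2*lam)) * ((Real.sinh (u x1 x2 / 2) * (p2 u x1 x2 / 2) : ℝ) : ℂ), 0;
           (1/2*lam + 1/(2*lam)) * ((Real.cosh (u x1 x2 / 2) * (p2 u x1 x2 / 2) : ℝ) : ℂ), 0]
        !![(1/2*lam - 1/(2*lam)) * ((Real.sinh (u x1 x2 / 2) * (p2 u x1 x2 / 2) : ℝ) : ℂ),
           (-(1/2*lam + 1/(2*lam))) * ((Real.cosh (u x1 x2 / 2) * (p2 u x1 x2 / 2) : ℝ) : ℂ); 0, 0]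
        !![0, Complex.I * ((p2 α x1 x2 : ℝ) : ℂ);
           Complex.I * ((p2 α x1 x2 : ℝ) : ℂ), 0] := by
  have hsh : HasDerivAt (fun s => Real.sinh (u x1 s / 2))
      (Real.cosh (u x1 x2 / 2) * (p2 u x1 x2 / 2)) x2 :=
    ((hderiv2 hu x1 x2).div_const 2).sinh
  have hch : HasDerivAt (fun s => Real.cosh (u x1 s / 2))
      (Real.sinh (u x1 x2 / 2) * (p2 u x1 x2 / 2)) x2 :=
    ((hderiv2 hu x1 x2).div_const 2).cosh
  have ha : HasDerivAt (fun s => α x1 s) (p2 α x1 x2) x2 := hderiv2 hα x1 x2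
  have hrw : ∀ s : ℝ, Pmat u α 0 lam x1 s =
      Matrix.fromBlocks 0
        !![(1/2*lam - 1/(2*lam)) * (Real.cosh (u x1 s / 2) : ℂ), 0;
           (1/2*lam + 1/(2*lam)) * (Real.sinh (u x1 s / 2) : ℂ), 0]
        !![(1/2*lam - 1/(2*lam)) * (Real.cosh (u x1 s / 2) : ℂ),
           (-(1/2*lam + 1/(2*lam))) * (Real.sinh (u x1 s / 2) : ℂ); 0, 0]
        !![0, Complex.I * (α x1 s : ℂ); Complex.I * (α x1 s : ℂ), 0] :=
    fun s => P0_eq u α lam x1 s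
  ext a b
  simp only [p2M, Matrix.of_apply, hrw]
  rcases a with a | a <;> rcases b with b | b <;>
    simp only [Matrix.fromBlocks_apply₁₁, Matrix.fromBlocks_apply₁₂,
      Matrix.fromBlocks_apply₂₁, Matrix.fromBlocks_apply₂₂] <;>
    fin_cases a <;> fin_cases b <;>
    simp only [Matrix.cons_val', Matrix.cons_val_zero, Matrix.cons_val_one,
      Matrix.head_cons, Matrix.empty_val', Matrix.cons_val_fin_one, Matrix.head_fin_const,
      Matrix.zero_apply, Fin.isValue] <;>
    first
      | exact deriv_const _ _
      | exact deriv_zmul hsh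
      | exact deriv_zmul hch
      | exact deriv_zmul ha

set_option maxHeartbeats 1600000 in
theorem sinhLaplace (u α β : ℝ → ℝ → ℝ)
    (hu : ContDiff ℝ (⊤ : ℕ∞) (Function.uncurry u))
    (hα : ContDiff ℝ (⊤ : ℕ∞) (Function.uncurry α))
    (hβ : ContDiff ℝ (⊤ : ℕ∞) (Function.uncurry β)) :
    ((∀ lam : ℂ, lam ≠ 0 → ∀ x1 x2 : ℝ,
        p1M (fun y1 y2 => Pmat u β 1 lam y1 y2) x1 x2
          - p2M (fun y1 y2 => Pmat u α 0 lam y1 y2) x1 x2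
          = Pmat u α 0 lam x1 x2 * Pmat u β 1 lam x1 x2
            - Pmat u β 1 lam x1 x2 * Pmat u α 0 lam x1 x2)
      ↔ (∀ x1 x2 : ℝ,
          α x1 x2 = -(1/2) * p2 u x1 x2
          ∧ β x1 x2 = (1/2) * p1 u x1 x2
          ∧ p1 β x1 x2 - p2 α x1 x2 = -(1/2) * Real.sinh (u x1 x2)))
    ∧ ((∀ x1 x2 : ℝ,
          α x1 x2 = -(1/2) * p2 u x1 x2
          ∧ β x1 x2 = (1/2) * p1 u x1 x2
          ∧ p1 β x1 x2 - p2 α x1 x2 = -(1/2) * Real.sinh (u x1 x2))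
        → ∀ x1 x2 : ℝ,
          p1 (p1 u) x1 x2 + p2 (p2 u) x1 x2 = -Real.sinh (u x1 x2)) := by
  constructor
  · constructor
    · -- forward direction
      intro h x1 x2
      have h2 := h 2 (by norm_num) x1 x2
      rw [p1M_P1_eq hu hβ 2 x1 x2, p2M_P0_eq hu hα 2 x1 x2,
        P0_eq u α 2 x1 x2, P1_eq u β 2 x1 x2] at h2
      have e1 := Matrix.ext_iff.mpr h2 (Sum.inl 0) (Sum.inr 1)
      have e2 := Matrix.ext_iff.mpr h2 (Sum.inl 1) (Sum.inr 0)
      have e3 := Matrix.ext_iff.mpr h2 (Sum.inr 0) (Sum.inr 1)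
      simp [Matrix.sub_apply, Matrix.mul_apply, Fintype.sum_sum_type,
        Fin.sum_univ_two] at e1 e2 e3
      have hcast : ((u x1 x2 : ℝ) : ℂ) / 2 = ((u x1 x2 / 2 : ℝ) : ℂ) := by push_cast; ring
      have hc : Complex.cosh (((u x1 x2 : ℝ) : ℂ) / 2) ≠ 0 := by
        rw [hcast, ← Complex.ofReal_cosh]
        exact_mod_cast (Real.cosh_pos (u x1 x2 / 2)).ne'
      have hβr : β x1 x2 = 1/2 * p1 u x1 x2 := by
        have h' : (Complex.I * (3/4) * Complex.cosh (((u x1 x2 : ℝ) : ℂ) / 2))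
              * ((β x1 x2 : ℝ) : ℂ)
            = (Complex.I * (3/4) * Complex.cosh (((u x1 x2 : ℝ) : ℂ) / 2))
              * ((1:ℂ)/2 * ((p1 u x1 x2 : ℝ) : ℂ)) := by
          linear_combination -e1
        have h'' := mul_left_cancel₀
          (mul_ne_zero (mul_ne_zero Complex.I_ne_zero (by norm_num)) hc) h'
        have hr : ((β x1 x2 : ℝ) : ℂ) = ((1/2 * p1 u x1 x2 : ℝ) : ℂ) := by
          push_cast; linear_combination h''
        exact_mod_cast hr
      have hαr : α x1 x2 = -(1/2) * p2 u x1 x2 := by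
        have h' : ((3:ℂ)/4 * Complex.cosh (((u x1 x2 : ℝ) : ℂ) / 2))
              * ((α x1 x2 : ℝ) : ℂ)
            = ((3:ℂ)/4 * Complex.cosh (((u x1 x2 : ℝ) : ℂ) / 2))
              * (-(1:ℂ)/2 * ((p2 u x1 x2 : ℝ) : ℂ)) := by
          linear_combination (3:ℂ)/5 * e2
            + ((3:ℂ)/4 * Complex.cosh (((u x1 x2 : ℝ) : ℂ) / 2) * ((α x1 x2 : ℝ) : ℂ))
              * Complex.I_mul_I
        have h'' := mul_left_cancel₀
          (mul_ne_zero (by norm_num) hc) h'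
        have : (α x1 x2 : ℂ) = -(1:ℂ)/2 * ((p2 u x1 x2 : ℝ) : ℂ) := h''
        have hr : α x1 x2 = -1/2 * p2 u x1 x2 := by exact_mod_cast this
        linarith
      refine ⟨hαr, hβr, ?_⟩
      have h' : Complex.I * (((p1 β x1 x2 : ℝ) : ℂ) - ((p2 α x1 x2 : ℝ) : ℂ))
          = Complex.I * (-(Complex.sinh (((u x1 x2 : ℝ) : ℂ) / 2)
              * Complex.cosh (((u x1 x2 : ℝ) : ℂ) / 2))) := by
        linear_combination e3
      have h'' := mul_left_cancel₀ Complex.I_ne_zero h'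
      rw [hcast, ← Complex.ofReal_sinh, ← Complex.ofReal_cosh] at h''
      have hr : p1 β x1 x2 - p2 α x1 x2
          = -(Real.sinh (u x1 x2 / 2) * Real.cosh (u x1 x2 / 2)) := by exact_mod_cast h''
      have hs : Real.sinh (u x1 x2) =
          2 * Real.sinh (u x1 x2 / 2) * Real.cosh (u x1 x2 / 2) := by
        rw [← Real.sinh_two_mul]; congr 1; ring
      rw [hs]; linarith
    · -- backward direction
      intro h lam hlam x1 x2
      obtain ⟨h1, h2, h3⟩ := h x1 x2
      have hs : Real.sinh (u x1 x2) =
          2 * Real.sinh (u x1 x2 / 2) * Real.cosh (u x1 x2 / 2) := by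
        rw [← Real.sinh_two_mul]; congr 1; ring
      have hαC : ((α x1 x2 : ℝ) : ℂ) = -(1/2) * ((p2 u x1 x2 : ℝ) : ℂ) := by
        rw [h1]; push_cast; ring
      have hβC : ((β x1 x2 : ℝ) : ℂ) = (1/2) * ((p1 u x1 x2 : ℝ) : ℂ) := by
        rw [h2]; push_cast; ring
      have hpbC : ((p1 β x1 x2 : ℝ) : ℂ) = ((p2 α x1 x2 : ℝ) : ℂ)
          - Complex.sinh (((u x1 x2 : ℝ) : ℂ) / 2) * Complex.cosh (((u x1 x2 : ℝ) : ℂ) / 2) := by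
        have hr : p1 β x1 x2 = p2 α x1 x2
            - Real.sinh (u x1 x2 / 2) * Real.cosh (u x1 x2 / 2) := by
          rw [hs] at h3; linarith
        rw [hr]; push_cast; ring
      rw [p1M_P1_eq hu hβ lam x1 x2, p2M_P0_eq hu hα lam x1 x2,
        P0_eq u α lam x1 x2, P1_eq u β lam x1 x2]
      rw [hαC, hβC, hpbC]
      rw [Matrix.fromBlocks_multiply, Matrix.fromBlocks_multiply,
        fromBlocks_sub, fromBlocks_sub, Matrix.fromBlocks_inj]
      refine ⟨?_, ?_, ?_, ?_⟩ <;>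
        · ext i j
          fin_cases i <;> fin_cases j <;>
            simp [Matrix.mul_apply, Fin.sum_univ_two]
          all_goals try field_simp
          all_goals try ring_nf
          all_goals try simp [Complex.I_sq]
          all_goals try ring_nf
          all_goals try ring
          all_goals try field_simp
          all_goals try ring
  · -- consequence: sinh-Laplace
    intro h x1 x2
    have hbfun : (fun s => β s x2) = fun s => (1/2 : ℝ) * p1 u s x2 :=
      funext fun s => (h s x2).2.1
    have hafun : (fun s => α x1 s) = fun s => (-(1/2) : ℝ) * p2 u x1 s :=
      funext fun s => (h x1 s).1
    have hpb : p1 β x1 x2 = 1/2 * p1 (p1 u) x1 x2 := by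
      show deriv (fun s => β s x2) x1 = _
      rw [hbfun, deriv_const_mul_field]
      rfl
    have hpa : p2 α x1 x2 = -(1/2) * p2 (p2 u) x1 x2 := by
      show deriv (fun s => α x1 s) x2 = _
      rw [hafun, deriv_const_mul_field]
      rfl
    have h3 := (h x1 x2).2.2
    rw [hpb, hpa] at h3
    linarith

end
end
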